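/- Let G be a split graph with split partition (C,S) containing twin vertices a and b (i.e., N(a) ∪ {a} = N(b) ∪ {b} or N(a) = N(b)). Then G admits an [⌞]-representation if and only if G − a does. -/
import Mathlib


/-- A grid edge: `(true, x, y)` is the vertical edge from `(x,y)` to `(x,y+1)`;
`(false, x, y)` is the horizontal edge from `(x,y)` to `(x+1,y)`. -/
abbrev GridEdge := Bool × ℤ × ℤ

/-- A single-bend (B1) path on the grid: bend-point `(x,y)`, a vertical arm of
length `h` (upwards if `vUp`, else downwards) and a horizontal arm of length `w`
(rightwards if `hRight`, else leftwards). -/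
structure BendPath where
  x : ℤ
  y : ℤ
  h : ℕ
  w : ℕ
  vUp : Bool
  hRight : Bool
  nontriv : 0 < h + w

namespace BendPath

def vertEdges (p : BendPath) : Set GridEdge :=
  {e | ∃ i : ℕ, i < p.h ∧ e = (true, p.x, if p.vUp then p.y + i else p.y - 1 - i)}

def horizEdges (p : BendPath) : Set GridEdge :=
  {e | ∃ i : ℕ, i < p.w ∧ e = (false, (if p.hRight then p.x + i else p.x - 1 - i), p.y)}

def edges (p : BendPath) : Set GridEdge := p.vertEdges ∪ p.horizEdges

/-- shape ⌞ : vertical up, horizontal right -/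
def isL (p : BendPath) : Prop := p.vUp = true ∧ p.hRight = true
/-- shape ⌟ : vertical up, horizontal left -/
def isJ (p : BendPath) : Prop := p.vUp = true ∧ p.hRight = false
/-- shape ⌝ : vertical down, horizontal left -/
def isN (p : BendPath) : Prop := p.vUp = false ∧ p.hRight = false
/-- shape ⌜ : vertical down, horizontal right -/
def isGamma (p : BendPath) : Prop := p.vUp = false ∧ p.hRight = true

end BendPath

def edgeEndpoints (e : GridEdge) : Set (ℤ × ℤ) :=
  if e.1 then {(e.2.1, e.2.2), (e.2.1, e.2.2 + 1)} else {(e.2.1, e.2.2), (e.2.1 + 1, e.2.2)}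

def BendPath.points (p : BendPath) : Set (ℤ × ℤ) := ⋃ e ∈ p.edges, edgeEndpoints e

def SharesEdge (p q : BendPath) : Prop := ∃ e, e ∈ p.edges ∧ e ∈ q.edges

/-- `P` is an EPG representation of `G` : distinct vertices are adjacent iff
their paths share a grid edge. -/
def IsEPGRep {V : Type*} (G : SimpleGraph V) (P : V → BendPath) : Prop :=
  ∀ u v : V, u ≠ v → (G.Adj u v ↔ SharesEdge (P u) (P v))

def SplitPartition {V : Type*} (G : SimpleGraph V) (C S : Set V) : Prop :=
  (∀ v, v ∈ C ∨ v ∈ S) ∧ Disjoint C S ∧ G.IsClique C ∧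
    S.Pairwise (fun a b => ¬ G.Adj a b)

def InL {V : Type*} (G : SimpleGraph V) : Prop :=
  ∃ P : V → BendPath, (∀ v, (P v).isL) ∧ IsEPGRep G P

/-! ### Auxiliary lemmas -/

namespace BendPath

lemma isL_mem_iff {p : BendPath} (hp : p.isL) (e : GridEdge) :
    e ∈ p.edges ↔ (e.1 = true ∧ e.2.1 = p.x ∧ p.y ≤ e.2.2 ∧ e.2.2 < p.y + p.h) ∨
      (e.1 = false ∧ e.2.2 = p.y ∧ p.x ≤ e.2.1 ∧ e.2.1 < p.x + p.w) := by
  obtain ⟨h1, h2⟩ := hp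
  obtain ⟨eb, ex, ey⟩ := e
  simp only [edges, vertEdges, horizEdges, h1, h2, if_true, Set.mem_union, Set.mem_setOf_eq,
    Prod.mk.injEq]
  constructor
  · rintro (⟨i, hi, rfl, rfl, rfl⟩ | ⟨i, hi, rfl, rfl, rfl⟩)
    · exact Or.inl ⟨rfl, rfl, by omega, by omega⟩
    · exact Or.inr ⟨rfl, rfl, by omega, by omega⟩
  · rintro (⟨rfl, rfl, h3, h4⟩ | ⟨rfl, rfl, h3, h4⟩)
    · exact Or.inl ⟨(ey - p.y).toNat, by omega, rfl, rfl, by omega⟩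
    · exact Or.inr ⟨(ex - p.x).toNat, by omega, rfl, by omega, rfl⟩

lemma shares_iff {p q : BendPath} (hp : p.isL) (hq : q.isL) :
    SharesEdge p q ↔
      (p.x = q.x ∧ max p.y q.y < min (p.y + p.h) (q.y + q.h)) ∨
      (p.y = q.y ∧ max p.x q.x < min (p.x + p.w) (q.x + q.w)) := by
  constructor
  · rintro ⟨e, hep, heq⟩
    rw [isL_mem_iff hp] at hep; rw [isL_mem_iff hq] at heq
    rcases hep with ⟨hb, hx, h1, h2⟩ | ⟨hb, hy, h1, h2⟩ <;>
      rcases heq with ⟨hb', hx', h1', h2'⟩ | ⟨hb', hy', h1', h2'⟩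
    · exact Or.inl ⟨by omega, by omega⟩
    · rw [hb] at hb'; exact absurd hb' (by simp)
    · rw [hb] at hb'; exact absurd hb' (by simp)
    · exact Or.inr ⟨by omega, by omega⟩
  · rintro (⟨hx, hov⟩ | ⟨hy, hov⟩)
    · refine ⟨(true, p.x, max p.y q.y), (isL_mem_iff hp _).2 ?_, (isL_mem_iff hq _).2 ?_⟩
      · exact Or.inl ⟨rfl, rfl, by dsimp only; omega, by dsimp only; omega⟩
      · exact Or.inl ⟨rfl, by dsimp only; omega, by dsimp only; omega, by dsimp only; omega⟩
    · refine ⟨(false, max p.x q.x, p.y), (isL_mem_iff hp _).2 ?_, (isL_mem_iff hq _).2 ?_⟩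
      · exact Or.inr ⟨rfl, rfl, by dsimp only; omega, by dsimp only; omega⟩
      · exact Or.inr ⟨rfl, by dsimp only; omega, by dsimp only; omega, by dsimp only; omega⟩

end BendPath

open BendPath

lemma sharesEdge_comm {p q : BendPath} : SharesEdge p q ↔ SharesEdge q p :=
  ⟨fun ⟨e, h1, h2⟩ => ⟨e, h2, h1⟩, fun ⟨e, h1, h2⟩ => ⟨e, h2, h1⟩⟩

lemma shares_self {p : BendPath} (hp : p.isL) : SharesEdge p p := by
  have hn := p.nontriv
  rw [shares_iff hp hp]
  omega

/-- scaling a path by 2 -/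
def double (p : BendPath) : BendPath :=
  ⟨2 * p.x, 2 * p.y, 2 * p.h, 2 * p.w, p.vUp, p.hRight, by have := p.nontriv; omega⟩

@[simp] lemma double_x (p : BendPath) : (double p).x = 2 * p.x := rfl
@[simp] lemma double_y (p : BendPath) : (double p).y = 2 * p.y := rfl
@[simp] lemma double_h (p : BendPath) : (double p).h = 2 * p.h := rfl
@[simp] lemma double_w (p : BendPath) : (double p).w = 2 * p.w := rfl

lemma double_isL {p : BendPath} (hp : p.isL) : (double p).isL := hp

lemma shares_double {p q : BendPath} (hp : p.isL) (hq : q.isL) :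
    SharesEdge (double p) (double q) ↔ SharesEdge p q := by
  rw [shares_iff (double_isL hp) (double_isL hq), shares_iff hp hq]
  simp only [double_x, double_y, double_h, double_w]
  push_cast
  omega

/-- a single vertical edge as a path -/
def vUnit (x y : ℤ) : BendPath := ⟨x, y, 1, 0, true, true, by omega⟩
/-- a single horizontal edge as a path -/
def hUnit (x y : ℤ) : BendPath := ⟨x, y, 0, 1, true, true, by omega⟩

@[simp] lemma vUnit_x (x y : ℤ) : (vUnit x y).x = x := rfl
@[simp] lemma vUnit_y (x y : ℤ) : (vUnit x y).y = y := rfl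
@[simp] lemma vUnit_h (x y : ℤ) : (vUnit x y).h = 1 := rfl
@[simp] lemma vUnit_w (x y : ℤ) : (vUnit x y).w = 0 := rfl
@[simp] lemma hUnit_x (x y : ℤ) : (hUnit x y).x = x := rfl
@[simp] lemma hUnit_y (x y : ℤ) : (hUnit x y).y = y := rfl
@[simp] lemma hUnit_h (x y : ℤ) : (hUnit x y).h = 0 := rfl
@[simp] lemma hUnit_w (x y : ℤ) : (hUnit x y).w = 1 := rfl

lemma vUnit_isL (x y : ℤ) : (vUnit x y).isL := ⟨rfl, rfl⟩
lemma hUnit_isL (x y : ℤ) : (hUnit x y).isL := ⟨rfl, rfl⟩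

lemma shares_vUnit {p : BendPath} (hp : p.isL) (x y : ℤ) :
    SharesEdge (vUnit x y) p ↔ (p.x = x ∧ p.y ≤ y ∧ y < p.y + p.h) := by
  rw [shares_iff (vUnit_isL x y) hp]
  simp only [vUnit_x, vUnit_y, vUnit_h, vUnit_w]
  push_cast
  omega

lemma shares_hUnit {p : BendPath} (hp : p.isL) (x y : ℤ) :
    SharesEdge (hUnit x y) p ↔ (p.y = y ∧ p.x ≤ x ∧ x < p.x + p.w) := by
  rw [shares_iff (hUnit_isL x y) hp]
  simp only [hUnit_x, hUnit_y, hUnit_h, hUnit_w]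
  push_cast
  omega

/-- Helly property for families of pairwise intersecting ⌞-paths. -/
lemma helly {ι : Type*} (P : ι → BendPath) (hL : ∀ i, (P i).isL) (b : ι)
    (hpair : ∀ i j, SharesEdge (P i) (P j)) :
    ∃ e, ∀ i, e ∈ (P i).edges := by
  have hopt : ∀ i, ((P b).x = (P i).x ∧
      max (P b).y (P i).y < min ((P b).y + (P b).h) ((P i).y + (P i).h)) ∨
      ((P b).y = (P i).y ∧
      max (P b).x (P i).x < min ((P b).x + (P b).w) ((P i).x + (P i).w)) :=
    fun i => (shares_iff (hL b) (hL i)).1 (hpair b i)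
  by_cases hall : ∀ i, (P b).x = (P i).x ∧
      max (P b).y (P i).y < min ((P b).y + (P b).h) ((P i).y + (P i).h)
  · -- all paths meet b's vertical segment
    obtain ⟨T, ⟨i0, hi0⟩, hub⟩ := Int.exists_greatest_of_bdd
      (P := fun t => ∃ i, t = max (P b).y (P i).y)
      ⟨(P b).y + (P b).h, by rintro z ⟨i, rfl⟩; have := (hall i).2; omega⟩ ⟨_, b, rfl⟩
    refine ⟨(true, (P b).x, T), fun i => (isL_mem_iff (hL i) _).2 (Or.inl ⟨rfl, ?_, ?_, ?_⟩)⟩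
    · exact (hall i).1
    · have := hub (max (P b).y (P i).y) ⟨i, rfl⟩
      dsimp only; omega
    · have h1 := (hall i).2
      have h2 := (hall i0).2
      rcases (shares_iff (hL i0) (hL i)).1 (hpair i0 i) with ⟨_, hov⟩ | ⟨hy, _⟩ <;>
        dsimp only <;> omega
  · -- some path misses b's vertical: then all paths meet b's horizontal segment
    push_neg at hall
    obtain ⟨i0, hi0⟩ := hall
    have hH0 : (P b).y = (P i0).y ∧
        max (P b).x (P i0).x < min ((P b).x + (P b).w) ((P i0).x + (P i0).w) :=
      (hopt i0).resolve_left (fun hc => absurd hc.2 (not_lt.2 (hi0 hc.1)))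
    have hallH : ∀ i, (P b).y = (P i).y ∧
        max (P b).x (P i).x < min ((P b).x + (P b).w) ((P i).x + (P i).w) := by
      intro i
      rcases hopt i with hv | hh
      · by_contra hh
        rcases (shares_iff (hL i) (hL i0)).1 (hpair i i0) with ⟨hx, hov⟩ | ⟨hy, hov⟩
        · have hx0 : (P b).x = (P i0).x := hv.1.trans hx
          have h3 := hi0 hx0
          have h4 := hv.2
          have h5 := hH0.1
          omega
        · have h4 := hv.1
          have h5 := hv.2
          have h6 := hH0.1
          have h7 := hH0.2
          omega
      · exact hh
    obtain ⟨Sx, ⟨i0', hi0'⟩, hub⟩ := Int.exists_greatest_of_bdd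
      (P := fun t => ∃ i, t = max (P b).x (P i).x)
      ⟨(P b).x + (P b).w, by rintro z ⟨i, rfl⟩; have := (hallH i).2; omega⟩ ⟨_, b, rfl⟩
    refine ⟨(false, Sx, (P b).y), fun i => (isL_mem_iff (hL i) _).2 (Or.inr ⟨rfl, ?_, ?_, ?_⟩)⟩
    · exact (hallH i).1
    · have := hub (max (P b).x (P i).x) ⟨i, rfl⟩
      dsimp only; omega
    · have h1 := (hallH i).2
      have h2 := (hallH i0').2
      rcases (shares_iff (hL i0') (hL i)).1 (hpair i0' i) with ⟨hx, _⟩ | ⟨_, hov⟩ <;>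
        dsimp only <;> omega

/-- For twins a, b in a split graph, G is an [⌞]-graph iff G - a is. -/
theorem remove_twin {V : Type*} (G : SimpleGraph V) (C S : Set V)
    (hsplit : SplitPartition G C S) (a b : V) (hab : a ≠ b)
    (htwin : insert a (G.neighborSet a) = insert b (G.neighborSet b) ∨
      G.neighborSet a = G.neighborSet b) :
    InL G ↔ InL (G.induce {u | u ≠ a}) := by
  classical
  have hba : b ≠ a := hab.symm
  constructor
  · rintro ⟨P, hPL, hPrep⟩
    refine ⟨fun v => P v.1, fun v => hPL _, fun u v huv => ?_⟩
    rw [SimpleGraph.comap_adj]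
    exact hPrep u.1 v.1 (fun h => huv (Subtype.ext h))
  · rintro ⟨P, hPL, hPrep⟩
    have key : ∀ (x y : V) (hx : x ≠ a) (hy : y ≠ a), x ≠ y →
        (G.Adj x y ↔ SharesEdge (P ⟨x, hx⟩) (P ⟨y, hy⟩)) := by
      intro x y hx hy hxy
      have h := hPrep ⟨x, hx⟩ ⟨y, hy⟩ (fun hc => hxy (congrArg Subtype.val hc))
      rwa [SimpleGraph.comap_adj] at h
    rcases htwin with hcl | hop
    · -- closed twins : copy b's path for a
      have hadjab : G.Adj a b := by
        have hb : b ∈ insert a (G.neighborSet a) := by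
          rw [hcl]; exact Set.mem_insert b _
        rcases Set.mem_insert_iff.1 hb with h | h
        · exact absurd h hba
        · exact h
      have htw : ∀ v, v ≠ a → v ≠ b → (G.Adj a v ↔ G.Adj b v) := by
        intro v hva hvb
        have h := Set.ext_iff.1 hcl v
        simpa [Set.mem_insert_iff, hva, hvb] using h
      refine ⟨fun v => if hva : v = a then P ⟨b, hba⟩ else P ⟨v, hva⟩, ?_, ?_⟩
      · intro v
        dsimp only
        by_cases hva : v = a
        · rw [dif_pos hva]; exact hPL _
        · rw [dif_neg hva]; exact hPL _
      · intro u v huv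
        dsimp only
        by_cases hua : u = a <;> by_cases hva : v = a
        · exact absurd (hua.trans hva.symm) huv
        · rw [hua] at huv ⊢
          rw [dif_pos rfl, dif_neg hva]
          by_cases hvb : v = b
          · rw [show (⟨v, hva⟩ : {u : V | u ≠ a}) = ⟨b, hba⟩ from Subtype.ext hvb, hvb]
            exact ⟨fun _ => shares_self (hPL _), fun _ => hadjab⟩
          · rw [htw v hva hvb]
            exact key b v hba hva (Ne.symm hvb)
        · rw [hva] at huv ⊢
          rw [dif_pos rfl, dif_neg hua, G.adj_comm, sharesEdge_comm]
          by_cases hub : u = b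
          · rw [show (⟨u, hua⟩ : {u : V | u ≠ a}) = ⟨b, hba⟩ from Subtype.ext hub, hub]
            exact ⟨fun _ => shares_self (hPL _), fun _ => hadjab⟩
          · rw [htw u hua hub]
            exact key b u hba hua (Ne.symm hub)
        · rw [dif_neg hua, dif_neg hva]
          exact key u v hua hva huv
    · -- open twins
      have hadj_iff : ∀ v, G.Adj a v ↔ G.Adj b v := by
        intro v
        rw [← SimpleGraph.mem_neighborSet, ← SimpleGraph.mem_neighborSet, hop]
      have hnadj : ¬ G.Adj a b := fun h => G.irrefl ((hadj_iff b).1 h)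
      have hNC : ∀ v, G.Adj b v → v ∈ C := by
        intro v hv
        rcases hsplit.1 v with hvC | hvS
        · exact hvC
        exfalso
        have hnotboth : a ∉ C ∨ b ∉ C := by
          by_contra hcc
          push_neg at hcc
          exact hnadj (hsplit.2.2.1 hcc.1 hcc.2 hab)
        rcases hnotboth with haC | hbC
        · rcases hsplit.1 a with h | haS
          · exact haC h
          · have hav : G.Adj a v := (hadj_iff v).2 hv
            exact hsplit.2.2.2 haS hvS (G.ne_of_adj hav) hav
        · rcases hsplit.1 b with h | hbS
          · exact hbC h
          · exact hsplit.2.2.2 hbS hvS (G.ne_of_adj hv) hv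
      have hpairQ : ∀ i j : {v : {u : V | u ≠ a} // v = (⟨b, hba⟩ : {u : V | u ≠ a}) ∨ G.Adj b v.1},
          SharesEdge (P i.1) (P j.1) := by
        intro i j
        by_cases hij : i.1 = j.1
        · rw [hij]; exact shares_self (hPL _)
        · have hadj : G.Adj i.1.1 j.1.1 := by
            rcases i.2 with hi | hi <;> rcases j.2 with hj | hj
            · exact absurd (hi.trans hj.symm) hij
            · rw [hi]; exact hj
            · rw [hj]; exact hi.symm
            · exact hsplit.2.2.1 (hNC _ hi) (hNC _ hj) (fun hc => hij (Subtype.ext hc))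
          exact (key i.1.1 j.1.1 i.1.2 j.1.2 (G.ne_of_adj hadj)).1 hadj
      obtain ⟨e, he⟩ := helly
        (ι := {v : {u : V | u ≠ a} // v = (⟨b, hba⟩ : {u : V | u ≠ a}) ∨ G.Adj b v.1})
        (fun i => P i.1) (fun i => hPL _) ⟨⟨b, hba⟩, Or.inl rfl⟩ hpairQ
      have heb : e ∈ (P ⟨b, hba⟩).edges := he ⟨⟨b, hba⟩, Or.inl rfl⟩
      have hev : ∀ (v) (hv : v ≠ a), G.Adj b v → e ∈ (P ⟨v, hv⟩).edges :=
        fun v hv h => he ⟨⟨v, hv⟩, Or.inr h⟩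
      have hrev : ∀ (v) (hv : v ≠ a), v ≠ b → e ∈ (P ⟨v, hv⟩).edges → G.Adj b v :=
        fun v hv hvb hm => (key b v hba hv (Ne.symm hvb)).2 ⟨e, heb, hm⟩
      -- common assembly given disjoint replacement paths for a and b
      have final : ∀ (Pa Pb : BendPath), Pa.isL → Pb.isL → ¬ SharesEdge Pa Pb →
          (∀ p : BendPath, p.isL → (SharesEdge Pa (double p) ↔ e ∈ p.edges)) →
          (∀ p : BendPath, p.isL → (SharesEdge Pb (double p) ↔ e ∈ p.edges)) →
          InL G := by
        intro Pa Pb hPaL hPbL hPab hSa hSb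
        refine ⟨fun v => if hva : v = a then Pa else
          if hvb : v = b then Pb else double (P ⟨v, hva⟩), ?_, ?_⟩
        · intro v
          dsimp only
          by_cases hva : v = a
          · rw [dif_pos hva]; exact hPaL
          rw [dif_neg hva]
          by_cases hvb : v = b
          · rw [dif_pos hvb]; exact hPbL
          · rw [dif_neg hvb]; exact double_isL (hPL _)
        · intro u v huv
          dsimp only
          by_cases hua : u = a
          · rw [hua] at huv ⊢
            have hva : v ≠ a := Ne.symm huv
            rw [dif_pos rfl, dif_neg hva]
            by_cases hvb : v = b
            · rw [dif_pos hvb, hvb]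
              exact ⟨fun h => absurd h hnadj, fun h => absurd h hPab⟩
            · rw [dif_neg hvb, hadj_iff v, hSa _ (hPL ⟨v, hva⟩)]
              exact ⟨hev v hva, hrev v hva hvb⟩
          · rw [dif_neg hua]
            by_cases hub : u = b
            · rw [dif_pos hub]
              by_cases hva : v = a
              · rw [dif_pos hva, hva, hub, G.adj_comm, sharesEdge_comm]
                exact ⟨fun h => absurd h hnadj, fun h => absurd h hPab⟩
              · have hvb : v ≠ b := fun h => huv (hub.trans h.symm)
                rw [dif_neg hva, dif_neg hvb, hub, hSb _ (hPL ⟨v, hva⟩)]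
                exact ⟨hev v hva, hrev v hva hvb⟩
            · rw [dif_neg hub]
              by_cases hva : v = a
              · rw [dif_pos hva, hva, G.adj_comm, sharesEdge_comm, hadj_iff u,
                  hSa _ (hPL ⟨u, hua⟩)]
                exact ⟨hev u hua, hrev u hua hub⟩
              · rw [dif_neg hva]
                by_cases hvb : v = b
                · rw [dif_pos hvb, hvb, G.adj_comm, sharesEdge_comm, hSb _ (hPL ⟨u, hua⟩)]
                  exact ⟨hev u hua, hrev u hua hub⟩
                · rw [dif_neg hvb, shares_double (hPL _) (hPL _)]
                  exact key u v hua hva huv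
      obtain ⟨eb, ex, ey⟩ := e
      cases eb
      · -- horizontal common edge
        refine final (hUnit (2 * ex + 1) (2 * ey)) (hUnit (2 * ex) (2 * ey))
          (hUnit_isL _ _) (hUnit_isL _ _) ?_ ?_ ?_
        · rw [shares_hUnit (hUnit_isL _ _)]
          simp only [hUnit_x, hUnit_y, hUnit_w]
          push_cast
          omega
        · intro p hp
          rw [shares_hUnit (double_isL hp), isL_mem_iff hp]
          simp only [double_x, double_y, double_h, double_w]
          push_cast
          simp only [Bool.false_eq_true, false_and, false_or, true_and]
          omega
        · intro p hp
          rw [shares_hUnit (double_isL hp), isL_mem_iff hp]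
          simp only [double_x, double_y, double_h, double_w]
          push_cast
          simp only [Bool.false_eq_true, false_and, false_or, true_and]
          omega
      · -- vertical common edge
        refine final (vUnit (2 * ex) (2 * ey + 1)) (vUnit (2 * ex) (2 * ey))
          (vUnit_isL _ _) (vUnit_isL _ _) ?_ ?_ ?_
        · rw [shares_vUnit (vUnit_isL _ _)]
          simp only [vUnit_x, vUnit_y, vUnit_h]
          push_cast
          omega
        · intro p hp
          rw [shares_vUnit (double_isL hp), isL_mem_iff hp]
          simp only [double_x, double_y, double_h, double_w]
          push_cast
          simp only [Bool.true_eq_false, false_and, or_false, true_and]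
          omega
        · intro p hp
          rw [shares_vUnit (double_isL hp), isL_mem_iff hp]
          simp only [double_x, double_y, double_h, double_w]
          push_cast
          simp only [Bool.true_eq_false, false_and, or_false, true_and]
          omega
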